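/- Let H ⊆ G be finite groups and let X = G/H with the left translation action of G. Then (G,H) is a Gelfand pair if and only if Σ_{g,h ∈ G} #X^{[g,h]} = Σ_{g,h ∈ G} #X^g · #X^h · #X^{gh}. -/

import Mathlib

open CategoryTheory Module
open scoped commutatorElement

/-- The permutation representation of `G` on complex-valued functions on a `G`-set `X`. -/
noncomputable def permRep (G X : Type) [Group G] [MulAction G X] :
    Representation ℂ G (X → ℂ) where
  toFun g :=
    { toFun := fun f x => f (g⁻¹ • x)
      map_add' := fun _ _ => rfl
      map_smul' := fun _ _ => rfl }
  map_one' := by ext f x; simp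
  map_mul' := by intro g h; ext f x; simp [mul_smul]

/-- The permutation representation `ℂ[X]` as a finite-dimensional representation. -/
noncomputable def permFDRep (G X : Type) [Group G] [MulAction G X] [Fintype X] :
    FDRep ℂ G :=
  FDRep.of (permRep G X)

/-!
Write the character `χ = #X^(·)` of `ℂ[X]` as a sum of irreducible characters `χᵢ` (listed with
repetition), of degrees `dᵢ`, and let `mᵢ` be the multiplicity of the `i`-th constituent. By Schur's
lemma the operators `Σ_g ρᵢ(g h g⁻¹)` and `Σ_h χ(h) ρᵢ(h)` are scalars; taking traces gives
`Σ_{g,h} χᵢ([g,h]) = |G|² / dᵢ` and, since `χ` is real, `Σ_{g,h} χ(g) χ(h) χᵢ(gh) = (|G| mᵢ)² / dᵢ`.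
Summing over `i`, the identity becomes `Σᵢ 1/dᵢ = Σᵢ mᵢ²/dᵢ`; as every `mᵢ ≥ 1`, this holds iff
every `mᵢ = 1`, i.e. iff `ℂ[X]` is multiplicity free.
-/

open LinearMap
open scoped Finset

universe u v

theorem sum_one_div_eq_sum_sq_div_iff {ι : Type*} [Fintype ι] {m d : ι → ℕ}
    (hm : ∀ i, 1 ≤ m i) (hd : ∀ i, d i ≠ 0) :
    ∑ i, (1 : ℚ) / d i = ∑ i, (m i : ℚ) ^ 2 / d i ↔ ∀ i, m i = 1 := by
  have hnonneg : ∀ i ∈ Finset.univ, 0 ≤ (m i : ℚ) ^ 2 / d i - 1 / d i := fun i _ => by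
    rw [← sub_div]
    exact div_nonneg (sub_nonneg.mpr (one_le_pow₀ (by exact_mod_cast hm i))) (Nat.cast_nonneg _)
  rw [eq_comm, ← sub_eq_zero, ← Finset.sum_sub_distrib, Finset.sum_eq_zero_iff_of_nonneg hnonneg]
  refine forall_congr' fun i => ?_
  rw [← sub_div, div_eq_zero_iff, or_iff_left (Nat.cast_ne_zero.mpr (hd i)), sub_eq_zero]
  simp only [Finset.mem_univ, true_implies]
  exact_mod_cast Nat.pow_eq_one.trans (or_iff_left two_ne_zero)

section

variable {k : Type u} {G : Type v} [Field k] [Group G]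

namespace Subrepresentation

variable {V : Type*} [AddCommGroup V] [Module k V] {ρ : Representation k G V}

theorem toSubmodule_strictMono :
    StrictMono (toSubmodule : Subrepresentation ρ → Submodule k V) :=
  fun _ _ h => h

theorem isCompl_toSubmodule {p q : Subrepresentation ρ} (h : IsCompl p q) :
    IsCompl p.toSubmodule q.toSubmodule :=
  .of_eq (congrArg toSubmodule h.inf_eq_bot) (congrArg toSubmodule h.sup_eq_top)

instance [FiniteDimensional k V] : IsAtomic (Subrepresentation ρ) :=
  isAtomic_of_orderBot_wellFounded_lt
    (toSubmodule_strictMono.wellFoundedLT (β := Submodule k V)).wf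

end Subrepresentation

namespace FDRep

theorem injective_of_mono {V W : FDRep k G} (f : V ⟶ W) [Mono f] :
    Function.Injective f.hom.hom.hom :=
  (Rep.mono_iff_injective ((forget₂ (FDRep k G) (Rep k G)).map f)).1 inferInstance

theorem isIso_of_bijective {V W : FDRep k G} (f : V ⟶ W)
    (hf : Function.Bijective f.hom.hom.hom) : IsIso f := by
  have : IsIso f.hom := (LinearEquiv.ofBijective _ hf).toFGModuleCatIso.isIso_hom
  exact Action.isIso_of_hom_isIso f

theorem hom_comm_apply {V W : FDRep k G} (f : V ⟶ W) (g : G) (x : V) :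
    f.hom.hom.hom (V.ρ g x) = W.ρ g (f.hom.hom.hom x) :=
  LinearMap.congr_fun (congrArg (fun φ => φ.hom.hom) (f.comm g)) x

theorem simple_of_isAtom {V : Type u} [AddCommGroup V] [Module k V] [FiniteDimensional k V]
    {ρ : Representation k G V} {p : Subrepresentation ρ} (hp : IsAtom p) :
    Simple (FDRep.of p.toRepresentation) where
  mono_isIso_iff_nonzero {Y} f _ := by
    refine ⟨fun _ hf => hp.1 ?_, fun hf => isIso_of_bijective f ⟨injective_of_mono f, ?_⟩⟩
    · subst hf
      have h1 := IsIso.inv_hom_id (0 : Y ⟶ FDRep.of p.toRepresentation)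
      rw [Limits.comp_zero] at h1
      refine Subrepresentation.toSubmodule_injective ((Submodule.eq_bot_iff _).mpr fun x hx => ?_)
      exact congrArg Subtype.val
        (LinearMap.congr_fun (congrArg (fun φ => φ.hom.hom.hom) h1) ⟨x, hx⟩).symm
    · let r : Subrepresentation ρ :=
        ⟨LinearMap.range (p.toSubmodule.subtype ∘ₗ f.hom.hom.hom), by
          rintro g _ ⟨y, rfl⟩
          exact ⟨Y.ρ g y, congrArg Subtype.val (hom_comm_apply f g y)⟩⟩
      have hr : r ≤ p := by rintro _ ⟨y, rfl⟩; exact (f.hom.hom.hom y).2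
      obtain hr0 | hrp := hp.le_iff.mp hr
      · refine absurd (Action.hom_ext _ _ (FGModuleCat.hom_ext (LinearMap.ext fun y => ?_))) hf
        exact Subtype.ext ((Submodule.eq_bot_iff _).mp
          (congrArg Subrepresentation.toSubmodule hr0) _ ⟨y, rfl⟩)
      · rintro ⟨x, hx⟩
        obtain ⟨y, hy⟩ : x ∈ r := hrp ▸ hx
        exact ⟨y, Subtype.ext hy⟩

end FDRep

namespace Representation

theorem character_eq_add_of_isCompl {V : Type*} [AddCommGroup V] [Module k V]
    [FiniteDimensional k V] {ρ : Representation k G V} {p q : Subrepresentation ρ}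
    (h : IsCompl p q) (g : G) :
    ρ.character g = p.toRepresentation.character g + q.toRepresentation.character g := by
  let A : Bool → Submodule k V := fun b => bif b then p.toSubmodule else q.toSubmodule
  have hA : DirectSum.IsInternal A :=
    (DirectSum.isInternal_submodule_iff_isCompl A (i := true) (j := false) (by decide)
      (by ext b; cases b <;> simp)).mpr (Subrepresentation.isCompl_toSubmodule h)
  have hmaps : ∀ b, Set.MapsTo (ρ g) (A b) (A b) := fun b => by
    cases b
    · exact fun x hx => q.apply_mem_toSubmodule g hx
    · exact fun x hx => p.apply_mem_toSubmodule g hx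
  have := LinearMap.trace_eq_sum_trace_restrict hA hmaps
  rw [Fintype.sum_bool] at this
  exact this

theorem exists_character_eq_sum_simple [Fintype G] [NeZero (Nat.card G : k)]
    {V : Type u} [AddCommGroup V] [Module k V] [FiniteDimensional k V]
    (ρ : Representation k G V) :
    ∃ (n : ℕ) (S : Fin n → FDRep k G),
      (∀ i, Simple (S i)) ∧ ∀ g, ρ.character g = ∑ i, (S i).character g := by
  induction h : finrank k V using Nat.strong_induction_on generalizing V with
  | _ d ih =>
  obtain htop | ⟨p, hp, -⟩ := eq_bot_or_exists_atom_le (⊤ : Subrepresentation ρ)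
  · have : Subsingleton V := (Submodule.subsingleton_iff k).mp
      (subsingleton_iff_bot_eq_top.mp (congrArg Subrepresentation.toSubmodule htop).symm)
    exact ⟨0, Fin.elim0, fun i => i.elim0, fun g => by
      simp [character, Subsingleton.elim (ρ g) 0]⟩
  · -- the complement exists by Maschke's theorem
    obtain ⟨q, hpq⟩ := exists_isCompl p
    have hq : finrank k q.toSubmodule < d := by
      have hadd := Submodule.finrank_add_eq_of_isCompl (Subrepresentation.isCompl_toSubmodule hpq)
      have hp0 : finrank k p.toSubmodule ≠ 0 := fun h0 =>
        hp.1 (Subrepresentation.toSubmodule_injective (Submodule.finrank_eq_zero.mp h0))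
      omega
    obtain ⟨n, S, hS, hχ⟩ := ih _ hq q.toRepresentation rfl
    refine ⟨n + 1, Fin.cons (FDRep.of p.toRepresentation) S,
      Fin.cases (FDRep.simple_of_isAtom hp) hS, fun g => ?_⟩
    rw [Fin.sum_univ_succ, Fin.cons_zero]
    simp only [Fin.cons_succ, ← hχ]
    exact character_eq_add_of_isCompl hpq g

end Representation

namespace FDRep

def IsMultiplicityFree (W : FDRep k G) : Prop :=
  ∀ T : FDRep k G, Simple T → finrank k (T ⟶ W) ≤ 1

theorem sum_character_mul_character_eq_card_mul_finrank [Fintype G] [Invertible (Nat.card G : k)]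
    (V W : FDRep k G) (hW : ∀ g, W.character g⁻¹ = W.character g) :
    ∑ g, W.character g * V.character g = Nat.card G * finrank k (V ⟶ W) := by
  rw [← scalar_product_char_eq_finrank_equivariant, mul_inv_cancel_left₀ (Invertible.ne_zero _)]
  exact Fintype.sum_equiv (Equiv.inv G) _ _ fun g => by simp [hW]

section Schur

variable [IsAlgClosed k]

theorem finrank_smul_eq_trace_smul_one (S : FDRep k G) [Simple S] (T : Module.End k S)
    (hT : ∀ g, Commute (S.ρ g) T) : (finrank k S : k) • T = trace k S T • 1 := by
  obtain ⟨c, hc⟩ := endomorphism_simple_eq_smul_id k (X := S)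
    (Action.Hom.mk (FGModuleCat.ofHom T) fun g => FGModuleCat.hom_ext (hT g).symm.eq)
  have hT' : T = c • 1 := (congrArg (fun f => f.hom.hom.hom) hc).symm
  rw [hT', map_smul, trace_one, smul_smul, smul_eq_mul, mul_comm]

variable [Fintype G]

theorem finrank_mul_sum_trace_conj_mul (S : FDRep k G) [Simple S] (A B : Module.End k S) :
    (finrank k S : k) * ∑ g, trace k S (S.ρ g * A * S.ρ g⁻¹ * B) =
      Nat.card G * trace k S A * trace k S B := by
  set T := ∑ g, S.ρ g * A * S.ρ g⁻¹
  have hT : ∀ x, Commute (S.ρ x) T := fun x => by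
    simp only [Commute, SemiconjBy, T, Finset.mul_sum, Finset.sum_mul]
    refine Fintype.sum_equiv (Equiv.mulLeft x) _ _ fun g => ?_
    simp only [Equiv.coe_mulLeft, mul_inv_rev, map_mul, mul_assoc, ← map_mul S.ρ x⁻¹ x,
      inv_mul_cancel, map_one, mul_one]
  have htrT : trace k S T = Nat.card G * trace k S A := by
    have hconj : ∀ g, trace k S (S.ρ g * A * S.ρ g⁻¹) = trace k S A := fun g => by
      rw [trace_mul_comm, ← mul_assoc, ← map_mul, inv_mul_cancel, map_one, one_mul]
    simp only [T, map_sum, hconj, Finset.sum_const, Finset.card_univ, Fintype.card_eq_nat_card,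
      nsmul_eq_mul]
  calc (finrank k S : k) * ∑ g, trace k S (S.ρ g * A * S.ρ g⁻¹ * B)
      = trace k S (((finrank k S : k) • T) * B) := by
        simp only [T, Finset.sum_mul, map_sum, smul_mul_assoc, map_smul, smul_eq_mul,
          Finset.mul_sum]
    _ = Nat.card G * trace k S A * trace k S B := by
        rw [finrank_smul_eq_trace_smul_one S T hT, smul_mul_assoc, one_mul, map_smul, htrT,
          smul_eq_mul]

theorem finrank_mul_sum_mul_character_mul (S : FDRep k G) [Simple S] (u : G → k)
    (hu : ∀ g h, u (h * g * h⁻¹) = u g) :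
    (finrank k S : k) * ∑ g, ∑ h, u g * u h * S.character (g * h) =
      (∑ g, u g * S.character g) ^ 2 := by
  set T := ∑ h, u h • S.ρ h
  have hT : ∀ x, Commute (S.ρ x) T := fun x => by
    simp only [Commute, SemiconjBy, T, Finset.mul_sum, Finset.sum_mul, mul_smul_comm,
      smul_mul_assoc]
    refine Fintype.sum_equiv (MulAut.conj x).toEquiv _ _ fun g => ?_
    simp only [MulEquiv.toEquiv_eq_coe, MulEquiv.coe_toEquiv, MulAut.conj_apply, hu, ← map_mul,
      inv_mul_cancel_right]
  have htrT : trace k S T = ∑ g, u g * S.character g := by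
    simp only [T, map_sum, map_smul, smul_eq_mul, character]
  have hrow : ∀ g, (finrank k S : k) * ∑ h, u g * u h * S.character (g * h) =
      u g * S.character g * trace k S T := fun g => by
    have : ∑ h, u g * u h * S.character (g * h) = u g * trace k S (S.ρ g * T) := by
      simp only [T, Finset.mul_sum, mul_smul_comm, map_sum, map_smul, smul_eq_mul, ← map_mul,
        character, mul_assoc]
    rw [this, mul_left_comm, ← smul_eq_mul (finrank k S : k), ← map_smul, ← mul_smul_comm,
      finrank_smul_eq_trace_smul_one S T hT, mul_smul_comm, mul_one, map_smul, smul_eq_mul,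
      character]
    ring
  rw [Finset.mul_sum, Finset.sum_congr rfl fun g _ => hrow g, ← Finset.sum_mul, htrT, sq]

variable [Invertible (Nat.card G : k)]

theorem finrank_mul_sum_character_commutator (S : FDRep k G) [Simple S] :
    (finrank k S : k) * ∑ g : G, ∑ h : G, S.character ⁅g, h⁆ = (Nat.card G : k) ^ 2 := by
  have hcomm : ∀ g h : G,
      S.character ⁅g, h⁆ = trace k S (S.ρ g * S.ρ h * S.ρ g⁻¹ * S.ρ h⁻¹) :=
    fun g h => by simp only [character, commutatorElement_def, map_mul]
  have horth : ∑ h : G, S.character h * S.character h⁻¹ = (Nat.card G : k) := by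
    have := char_orthonormal S S
    rw [if_pos ⟨Iso.refl S⟩, inv_mul_eq_one₀ (Invertible.ne_zero _)] at this
    exact this.symm
  calc (finrank k S : k) * ∑ g : G, ∑ h : G, S.character ⁅g, h⁆
      = ∑ h : G, (finrank k S : k) * ∑ g : G, trace k S (S.ρ g * S.ρ h * S.ρ g⁻¹ * S.ρ h⁻¹) := by
        simp only [hcomm]
        rw [Finset.sum_comm, Finset.mul_sum]
    _ = ∑ h : G, Nat.card G * (S.character h * S.character h⁻¹) := by
        refine Finset.sum_congr rfl fun h _ => ?_
        rw [finrank_mul_sum_trace_conj_mul, mul_assoc]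
        rfl
    _ = (Nat.card G : k) ^ 2 := by rw [← Finset.mul_sum, horth, sq]

theorem natCast_finrank_ne_zero (S : FDRep k G) [Simple S] : (finrank k S : k) ≠ 0 :=
  left_ne_zero_of_mul (by
    rw [finrank_mul_sum_character_commutator]
    exact pow_ne_zero 2 (Invertible.ne_zero _))

theorem sum_character_commutator (S : FDRep k G) [Simple S] :
    ∑ g : G, ∑ h : G, S.character ⁅g, h⁆ = (Nat.card G : k) ^ 2 / finrank k S :=
  eq_div_of_mul_eq (natCast_finrank_ne_zero S) (by
    rw [mul_comm, finrank_mul_sum_character_commutator])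

theorem sum_mul_character_mul (S : FDRep k G) [Simple S] (u : G → k)
    (hu : ∀ g h, u (h * g * h⁻¹) = u g) :
    ∑ g, ∑ h, u g * u h * S.character (g * h) = (∑ g, u g * S.character g) ^ 2 / finrank k S :=
  eq_div_of_mul_eq (natCast_finrank_ne_zero S) (by
    rw [mul_comm, finrank_mul_sum_mul_character_mul S u hu])

end Schur

section Multiplicity

variable [IsAlgClosed k] [CharZero k] [Fintype G]

section

variable {ι : Type*} [Fintype ι] {S : ι → FDRep k G} [∀ i, Simple (S i)] {W : FDRep k G}

open scoped Classical in
theorem finrank_hom_eq_card_iso (hW : ∀ g, W.character g = ∑ i, (S i).character g)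
    (T : FDRep k G) [Simple T] : finrank k (T ⟶ W) = #{i | Nonempty (S i ≅ T)} := by
  apply Nat.cast_injective (R := k)
  rw [← scalar_product_char_eq_finrank_equivariant]
  simp only [hW, Finset.sum_mul]
  rw [Finset.sum_comm, Finset.mul_sum]
  simp only [char_orthonormal, Finset.sum_boole]

theorem one_le_finrank_hom (hW : ∀ g, W.character g = ∑ i, (S i).character g) (i : ι) :
    1 ≤ finrank k (S i ⟶ W) := by
  classical
  rw [finrank_hom_eq_card_iso hW]
  exact Finset.card_pos.mpr ⟨i, Finset.mem_filter.mpr ⟨Finset.mem_univ i, ⟨Iso.refl _⟩⟩⟩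

theorem isMultiplicityFree_iff_forall_finrank_hom_eq_one
    (hW : ∀ g, W.character g = ∑ i, (S i).character g) :
    W.IsMultiplicityFree ↔ ∀ i, finrank k (S i ⟶ W) = 1 := by
  classical
  refine ⟨fun h i => le_antisymm (h _ inferInstance) (one_le_finrank_hom hW i), fun h T _ => ?_⟩
  by_cases hT : ∃ i, Nonempty (S i ≅ T)
  · obtain ⟨i, ⟨e⟩⟩ := hT
    rw [← h i]
    exact ((Linear.homCongr k e (Iso.refl W)).finrank_eq).ge
  · rw [finrank_hom_eq_card_iso hW, Finset.card_eq_zero.mpr]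
    · exact zero_le_one
    · exact Finset.filter_eq_empty_iff.mpr fun i _ hi => hT ⟨i, hi⟩

theorem sum_character_commutator_of_sum_simple (hW : ∀ g, W.character g = ∑ i, (S i).character g) :
    ∑ g : G, ∑ h : G, W.character ⁅g, h⁆ =
      (Nat.card G : k) ^ 2 * ∑ i, 1 / (finrank k (S i) : k) := by
  calc ∑ g : G, ∑ h : G, W.character ⁅g, h⁆
      = ∑ i, ∑ g : G, ∑ h : G, (S i).character ⁅g, h⁆ := by
        simp only [hW]
        exact Finset.sum_comm_cycle
    _ = _ := by simp only [sum_character_commutator, Finset.mul_sum, mul_one_div]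

theorem sum_character_mul_character_mul_of_sum_simple
    (hW : ∀ g, W.character g = ∑ i, (S i).character g)
    (hWinv : ∀ g, W.character g⁻¹ = W.character g) :
    ∑ g, ∑ h, W.character g * W.character h * W.character (g * h) =
      (Nat.card G : k) ^ 2 * ∑ i, (finrank k (S i ⟶ W) : k) ^ 2 / finrank k (S i) := by
  calc ∑ g, ∑ h, W.character g * W.character h * W.character (g * h)
      = ∑ i, ∑ g, ∑ h, W.character g * W.character h * (S i).character (g * h) := by
        simp only [hW (_ * _), Finset.mul_sum]
        exact Finset.sum_comm_cycle
    _ = _ := by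
        simp only [sum_mul_character_mul _ _ W.char_conj,
          sum_character_mul_character_eq_card_mul_finrank _ _ hWinv, Finset.mul_sum, mul_pow,
          mul_div_assoc]

end

theorem isMultiplicityFree_iff_sum_character_commutator_eq (W : FDRep k G)
    (hW : ∀ g, W.character g⁻¹ = W.character g) :
    W.IsMultiplicityFree ↔ ∑ g : G, ∑ h : G, W.character ⁅g, h⁆ =
      ∑ g, ∑ h, W.character g * W.character h * W.character (g * h) := by
  obtain ⟨n, S, hS, hWS⟩ := Representation.exists_character_eq_sum_simple W.ρ
  have hd : ∀ i, finrank k (S i) ≠ 0 := fun i => by exact_mod_cast natCast_finrank_ne_zero (S i)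
  rw [sum_character_commutator_of_sum_simple hWS,
    sum_character_mul_character_mul_of_sum_simple hWS hW,
    mul_right_inj' (pow_ne_zero 2 (Invertible.ne_zero _)),
    isMultiplicityFree_iff_forall_finrank_hom_eq_one hWS,
    ← sum_one_div_eq_sum_sq_div_iff (one_le_finrank_hom hWS) hd,
    ← (Rat.cast_injective (α := k)).eq_iff]
  push_cast
  rfl

end Multiplicity

end FDRep

end

section Permutation

variable {G X : Type} [Group G] [MulAction G X]

theorem inv_smul_eq_self_iff {g : G} {x : X} : g⁻¹ • x = x ↔ g • x = x :=
  Set.ext_iff.mp (MulAction.fixedBy_inv (α := X) g) x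

variable [Fintype X]

theorem permFDRep_character (g : G) :
    (permFDRep G X).character g = Nat.card {x : X // g • x = x} := by
  classical
  rw [Nat.card_eq_fintype_card, Fintype.card_subtype, ← Finset.sum_boole]
  change trace ℂ (X → ℂ) (permRep G X g) = _
  rw [trace_eq_matrix_trace ℂ (Pi.basisFun ℂ X), Matrix.trace]
  refine Finset.sum_congr rfl fun x _ => ?_
  simp [permRep, Pi.single_apply, inv_smul_eq_self_iff]

theorem permFDRep_character_inv (g : G) :
    (permFDRep G X).character g⁻¹ = (permFDRep G X).character g := by
  simp only [permFDRep_character, inv_smul_eq_self_iff]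

theorem isMultiplicityFree_permFDRep_iff [Fintype G] :
    (permFDRep G X).IsMultiplicityFree ↔
      (∑ g : G, ∑ h : G, Nat.card {x : X // ⁅g, h⁆ • x = x}) =
        ∑ g : G, ∑ h : G, Nat.card {x : X // g • x = x} * Nat.card {x : X // h • x = x} *
          Nat.card {x : X // (g * h) • x = x} := by
  rw [← Nat.cast_inj (R := ℂ)]
  push_cast
  simp only [← permFDRep_character]
  exact FDRep.isMultiplicityFree_iff_sum_character_commutator_eq _ permFDRep_character_inv

end Permutation

/-- **A criterion for Gelfand pairs** (Corollary 4.2). For `X = G/H`, the pair `(G,H)` is a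
Gelfand pair (i.e. every irreducible representation appears in `ℂ[X]` with multiplicity at
most one) iff `Σ_{g,h} #X^{[g,h]} = Σ_{g,h} #X^g · #X^h · #X^{gh}`. -/
theorem stmt_4 {G : Type} [Group G] [Fintype G] (H : Subgroup G) [Fintype (G ⧸ H)] :
    (∀ ρ : FDRep ℂ G, Simple ρ → finrank ℂ (ρ ⟶ permFDRep G (G ⧸ H)) ≤ 1) ↔
    (∑ g : G, ∑ h : G, Nat.card {x : G ⧸ H // ⁅g, h⁆ • x = x}) =
      ∑ g : G, ∑ h : G,
        Nat.card {x : G ⧸ H // g • x = x} * Nat.card {x : G ⧸ H // h • x = x} *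
          Nat.card {x : G ⧸ H // (g * h) • x = x} :=
  isMultiplicityFree_permFDRep_iff
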